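/- arXiv:2502.09525 — 5 statements merged into one kernel-verified Lean document; each statement's English description precedes it below -/
import Mathlib

section
/- Let M be a symmetric positive semidefinite d×d real matrix and v a vector with ‖v‖ ≤ 1 such that vᵀMv ≥ α > 0. Then there exists a unit eigenvector u of M with eigenvalue at least α/2 such that (u·v)² ≥ α³/(8‖M‖_F³), i.e. |u·v| ≥ (α/(2‖M‖_F))^{3/2} up to an absolute constant. -/
/-!
Expand `v = ∑ cᵢ bᵢ` in an orthonormal eigenbasis `(bᵢ)` of `M` with eigenvalues `λᵢ`:
then `∑ cᵢ² ≤ 1`, `vᵀ M v = ∑ λᵢ cᵢ²` and `∑ λᵢ² = ‖M‖_F²`. Eigenvalues below `α / 2`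
contribute at most `α / 2` to `vᵀ M v`, so the indices `S` with `λᵢ ≥ α / 2` carry at
least `α / 2`. By Chebyshev `#S ≤ 4 ‖M‖_F² / α²`, and every `λᵢ ≤ ‖M‖_F`, so averaging
over `S` gives an `i ∈ S` with `cᵢ² ≥ α³ / (8 ‖M‖_F³)`.
-/

open Matrix Finset

namespace OrthonormalBasis

variable {ι m n : Type*} [Fintype ι] [Fintype m] [Fintype n]

theorem sum_dotProduct_mul_dotProduct (b : OrthonormalBasis ι ℝ (EuclideanSpace ℝ n))
    (x y : n → ℝ) : ∑ i, (⇑(b i) ⬝ᵥ x) * (⇑(b i) ⬝ᵥ y) = x ⬝ᵥ y := by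
  simpa [EuclideanSpace.inner_eq_star_dotProduct, dotProduct_comm] using
    b.sum_inner_mul_inner (WithLp.toLp 2 x) (WithLp.toLp 2 y)

theorem dotProduct_self_eq_one (b : OrthonormalBasis ι ℝ (EuclideanSpace ℝ n)) (i : ι) :
    ⇑(b i) ⬝ᵥ ⇑(b i) = 1 := by
  have h := real_inner_self_eq_norm_sq (b i)
  rw [b.orthonormal.1 i, EuclideanSpace.inner_eq_star_dotProduct] at h
  simpa using h

theorem sum_mulVec_dotProduct_self (b : OrthonormalBasis ι ℝ (EuclideanSpace ℝ n))
    (A : Matrix m n ℝ) : ∑ i, (A *ᵥ ⇑(b i)) ⬝ᵥ (A *ᵥ ⇑(b i)) = ∑ j, ∑ k, A j k ^ 2 := by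
  calc ∑ i, (A *ᵥ ⇑(b i)) ⬝ᵥ (A *ᵥ ⇑(b i))
      = ∑ j, ∑ i, (⇑(b i) ⬝ᵥ A j) * (⇑(b i) ⬝ᵥ A j) := by
        rw [Finset.sum_comm]
        simp only [dotProduct, mulVec, mul_comm]
    _ = ∑ j, ∑ k, A j k ^ 2 := by
        simp only [b.sum_dotProduct_mul_dotProduct]
        simp only [dotProduct, sq]

end OrthonormalBasis

namespace Matrix.IsHermitian

variable {n : Type*} [Fintype n] [DecidableEq n] {A : Matrix n n ℝ} (hA : A.IsHermitian)

theorem eigenvectorBasis_dotProduct_mulVec (i : n) (x : n → ℝ) :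
    ⇑(hA.eigenvectorBasis i) ⬝ᵥ (A *ᵥ x) =
      hA.eigenvalues i * (⇑(hA.eigenvectorBasis i) ⬝ᵥ x) := by
  rw [dotProduct_mulVec, ← mulVec_transpose, show Aᵀ = A from hA, hA.mulVec_eigenvectorBasis,
    smul_dotProduct, smul_eq_mul]

theorem dotProduct_mulVec_eq_sum_eigenvalues_mul_sq (x : n → ℝ) :
    x ⬝ᵥ (A *ᵥ x) = ∑ i, hA.eigenvalues i * (⇑(hA.eigenvectorBasis i) ⬝ᵥ x) ^ 2 := by
  rw [← hA.eigenvectorBasis.sum_dotProduct_mul_dotProduct]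
  simp only [hA.eigenvectorBasis_dotProduct_mulVec]
  congr 1 with i
  ring

theorem sum_eigenvalues_sq : ∑ i, hA.eigenvalues i ^ 2 = ∑ j, ∑ k, A j k ^ 2 := by
  rw [← hA.eigenvectorBasis.sum_mulVec_dotProduct_self]
  simp only [hA.mulVec_eigenvectorBasis, smul_dotProduct, dotProduct_smul,
    hA.eigenvectorBasis.dotProduct_self_eq_one, smul_eq_mul, mul_one, sq]

end Matrix.IsHermitian

section WeightedSum

variable {ι : Type*} [Fintype ι] (lam c : ι → ℝ)

theorem sub_le_sum_filter_le_mul_sq {α θ : ℝ} (hθ : 0 ≤ θ) (hc : ∑ i, c i ^ 2 ≤ 1)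
    (hsum : α ≤ ∑ i, lam i * c i ^ 2) :
    α - θ ≤ ∑ i ∈ univ.filter (θ ≤ lam ·), lam i * c i ^ 2 := by
  have hsmall : ∑ i ∈ univ.filter (¬ θ ≤ lam ·), lam i * c i ^ 2 ≤ θ :=
    calc ∑ i ∈ univ.filter (¬ θ ≤ lam ·), lam i * c i ^ 2
        ≤ ∑ i ∈ univ.filter (¬ θ ≤ lam ·), θ * c i ^ 2 := by
          refine sum_le_sum fun i hi => ?_
          have : lam i < θ := not_le.mp (mem_filter.mp hi).2
          gcongr
      _ ≤ ∑ i, θ * c i ^ 2 :=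
          sum_le_sum_of_subset_of_nonneg (subset_univ _) fun _ _ _ => by positivity
      _ ≤ θ := by rw [← mul_sum]; exact mul_le_of_le_one_right hθ hc
  rw [← sum_filter_add_sum_filter_not univ (θ ≤ lam ·)] at hsum
  linarith

theorem card_filter_le_mul_sq_le_sum_sq {θ : ℝ} (hθ : 0 ≤ θ) :
    #(univ.filter (θ ≤ lam ·)) * θ ^ 2 ≤ ∑ i, lam i ^ 2 :=
  calc (#(univ.filter (θ ≤ lam ·)) : ℝ) * θ ^ 2
      ≤ ∑ i ∈ univ.filter (θ ≤ lam ·), lam i ^ 2 := by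
        rw [← nsmul_eq_mul]
        exact card_nsmul_le_sum _ _ _ fun i hi => by
          have := (mem_filter.mp hi).2
          gcongr
    _ ≤ ∑ i, lam i ^ 2 :=
        sum_le_sum_of_subset_of_nonneg (subset_univ _) fun _ _ _ => sq_nonneg _

theorem exists_half_le_and_cube_div_le_sq {α F : ℝ} (hα : 0 < α) (hF : 0 ≤ F)
    (hc : ∑ i, c i ^ 2 ≤ 1) (hlamF : ∑ i, lam i ^ 2 ≤ F ^ 2)
    (hsum : α ≤ ∑ i, lam i * c i ^ 2) :
    ∃ i, α / 2 ≤ lam i ∧ α ^ 3 / (8 * F ^ 3) ≤ c i ^ 2 := by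
  set S := univ.filter (α / 2 ≤ lam ·)
  have hbig : α / 2 ≤ ∑ i ∈ S, lam i * c i ^ 2 := by
    have := sub_le_sum_filter_le_mul_sq lam c (θ := α / 2) (by positivity) hc hsum
    linarith
  have hcard := card_filter_le_mul_sq_le_sum_sq lam (θ := α / 2) (by positivity)
  have hle_F : ∀ i, lam i ≤ F := fun i =>
    (le_abs_self _).trans <| abs_le_of_sq_le_sq
      ((single_le_sum (fun j _ => sq_nonneg (lam j)) (mem_univ i)).trans hlamF) hF
  have hS : S.Nonempty := by
    by_contra h
    rw [not_nonempty_iff_eq_empty.mp h, sum_empty] at hbig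
    linarith
  have hFpos : 0 < F := by
    obtain ⟨i, hi⟩ := hS
    linarith [(mem_filter.mp hi).2, hle_F i]
  set t := α ^ 3 / (8 * F ^ 3)
  have hcardt : ∑ _i ∈ S, F * t ≤ ∑ i ∈ S, lam i * c i ^ 2 := by
    refine le_trans ?_ hbig
    rw [sum_const, nsmul_eq_mul]
    calc (#S : ℝ) * (F * t) = #S * (α / 2) ^ 2 * (α / (2 * F ^ 2)) := by
          simp only [t]; field_simp; ring
      _ ≤ F ^ 2 * (α / (2 * F ^ 2)) := by gcongr; exact hcard.trans hlamF
      _ = α / 2 := by field_simp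
  obtain ⟨i, hiS, hi⟩ := exists_le_of_sum_le hS hcardt
  refine ⟨i, (mem_filter.mp hiS).2, le_of_mul_le_mul_left ?_ hFpos⟩
  exact hi.trans (mul_le_mul_of_nonneg_right (hle_F i) (sq_nonneg _))

end WeightedSum

theorem exists_correlated_eigenvector_general {d : ℕ} (M : Matrix (Fin d) (Fin d) ℝ)
    (hM : M.PosSemidef) (v : Fin d → ℝ) (hv : v ⬝ᵥ v ≤ 1) (α : ℝ) (hα : 0 < α)
    (hquad : α ≤ v ⬝ᵥ M.mulVec v) :
    ∃ (u : Fin d → ℝ) (μ : ℝ), M.mulVec u = μ • u ∧ u ⬝ᵥ u = 1 ∧ α / 2 ≤ μ ∧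
      α ^ 3 / (8 * (Real.sqrt (∑ i, ∑ j, (M i j) ^ 2)) ^ 3) ≤ (u ⬝ᵥ v) ^ 2 := by
  have hH := hM.isHermitian
  set b := hH.eigenvectorBasis
  obtain ⟨i, hi, hcorr⟩ := exists_half_le_and_cube_div_le_sq hH.eigenvalues
    (fun i => ⇑(b i) ⬝ᵥ v) (F := √(∑ i, ∑ j, M i j ^ 2)) hα (Real.sqrt_nonneg _)
    (by simpa only [sq, b.sum_dotProduct_mul_dotProduct] using hv)
    (by rw [Real.sq_sqrt (by positivity), hH.sum_eigenvalues_sq])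
    (hquad.trans (hH.dotProduct_mulVec_eq_sum_eigenvalues_mul_sq v).le)
  exact ⟨b i, hH.eigenvalues i, hH.mulVec_eigenvectorBasis i, b.dotProduct_self_eq_one i,
    hi, hcorr⟩

/-- If `M` is symmetric PSD with positive Frobenius norm, `‖v‖ ≤ 1` and `vᵀ M v ≥ α > 0`, then
there is a unit eigenvector `u` of `M` with eigenvalue at least `α/2` such that
`(u·v)² ≥ α³ / (8 ‖M‖_F³)`. -/
theorem exists_correlated_eigenvector {d : ℕ} (M : Matrix (Fin d) (Fin d) ℝ)
    (hM : M.PosSemidef) (v : Fin d → ℝ) (hv : v ⬝ᵥ v ≤ 1) (α : ℝ) (hα : 0 < α)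
    (hquad : α ≤ v ⬝ᵥ M.mulVec v)
    (hF : 0 < Real.sqrt (∑ i, ∑ j, (M i j) ^ 2)) :
    ∃ (u : Fin d → ℝ) (μ : ℝ), M.mulVec u = μ • u ∧ u ⬝ᵥ u = 1 ∧ α / 2 ≤ μ ∧
      α ^ 3 / (8 * (Real.sqrt (∑ i, ∑ j, (M i j) ^ 2)) ^ 3) ≤ (u ⬝ᵥ v) ^ 2 :=
  exists_correlated_eigenvector_general M hM v hv α hα hquad
end

section
/- Let W be a K-dimensional subspace of ℝ^d with orthonormal basis b⁽¹⁾,…,b⁽ᴷ⁾, and let V ⊆ V' be subspaces of ℝ^d. Define Φ(V) = Σᵢ ‖proj_{V^⊥} b⁽ⁱ⁾‖². Suppose there exist a unit vector v ∈ V' and a unit vector w ∈ W such that w · proj_{V^⊥}(v) ≥ β ≥ 0. Then Φ(V') ≤ Φ(V) − β². -/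
open RealInnerProductSpace

/-!
Write `P_K` for the orthogonal projection onto `K`. Since `V'ᗮ ≤ Vᗮ`, the vector `P_{Vᗮ} x`
splits orthogonally as `P_{V'ᗮ} x + r` with `r ∈ Vᗮ ⊓ V'`. The vector `u = P_{Vᗮ} v` lies in
`Vᗮ ⊓ V'` and has norm at most `1`, so `⟪x, u⟫ = ⟪r, u⟫` and
`‖P_{Vᗮ} x‖² ≥ ‖P_{V'ᗮ} x‖² + ⟪x, u⟫²`. Summing over the basis vectors `b i`, the extra terms
add up to `∑ ⟪b i, u⟫² ≥ ⟪w, u⟫² ≥ β²`, by Cauchy–Schwarz in the coordinates of `w`.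
-/

namespace Submodule

variable {𝕜 E : Type*} [RCLike 𝕜] [NormedAddCommGroup E] [InnerProductSpace 𝕜 E]
  {K K' : Submodule 𝕜 E} [K.HasOrthogonalProjection] [K'.HasOrthogonalProjection]

theorem inner_starProjection_sub_starProjection_of_le (h : K' ≤ K) (x : E) :
    inner 𝕜 (K.starProjection x - K'.starProjection x) (K'.starProjection x) = 0 := by
  have hK : inner 𝕜 (x - K.starProjection x) (K'.starProjection x) = 0 :=
    K.starProjection_inner_eq_zero x _ (h (K'.starProjection_apply_mem x))
  have hK' : inner 𝕜 (x - K'.starProjection x) (K'.starProjection x) = 0 :=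
    K'.starProjection_inner_eq_zero x _ (K'.starProjection_apply_mem x)
  rw [← sub_sub_sub_cancel_left _ _ x, inner_sub_left, hK, hK', sub_zero]

theorem norm_sq_starProjection_eq_of_le (h : K' ≤ K) (x : E) :
    ‖K.starProjection x‖ ^ 2 =
      ‖K'.starProjection x‖ ^ 2 + ‖K.starProjection x - K'.starProjection x‖ ^ 2 := by
  have := norm_add_sq_eq_norm_sq_add_norm_sq_of_inner_eq_zero _ _
    (inner_eq_zero_symm.1 (inner_starProjection_sub_starProjection_of_le h x))
  rwa [add_sub_cancel, ← sq, ← sq, ← sq] at this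

theorem inner_starProjection_sub_starProjection_eq_of_mem {u : E} (hu : u ∈ K) (hu' : u ∈ K'ᗮ)
    (x : E) :
    inner 𝕜 (K.starProjection x - K'.starProjection x) u = inner 𝕜 x u := by
  have hK : inner 𝕜 (x - K.starProjection x) u = 0 := K.starProjection_inner_eq_zero x u hu
  have hK' : inner 𝕜 (K'.starProjection x) u = 0 :=
    (K'.mem_orthogonal u).1 hu' _ (K'.starProjection_apply_mem x)
  rw [inner_sub_left, hK', sub_zero]
  rwa [inner_sub_left, sub_eq_zero, eq_comm] at hK

end Submodule

section

variable {E : Type*} [NormedAddCommGroup E] [InnerProductSpace ℝ E]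

theorem Submodule.norm_sq_starProjection_add_inner_sq_le {K K' : Submodule ℝ E}
    [K.HasOrthogonalProjection] [K'.HasOrthogonalProjection] (h : K' ≤ K) {u : E} (hu : u ∈ K)
    (hu' : u ∈ K'ᗮ) (hu1 : ‖u‖ ≤ 1) (x : E) :
    ‖K'.starProjection x‖ ^ 2 + ⟪x, u⟫ ^ 2 ≤ ‖K.starProjection x‖ ^ 2 := by
  set r := K.starProjection x - K'.starProjection x
  have hru : ⟪x, u⟫ ^ 2 ≤ ‖r‖ ^ 2 := calc
    ⟪x, u⟫ ^ 2 = |⟪r, u⟫| ^ 2 := by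
        rw [sq_abs, inner_starProjection_sub_starProjection_eq_of_mem hu hu']
    _ ≤ (‖r‖ * ‖u‖) ^ 2 := by gcongr; exact abs_real_inner_le_norm r u
    _ ≤ ‖r‖ ^ 2 := by
        rw [mul_pow]
        exact mul_le_of_le_one_right (by positivity) (pow_le_one₀ (norm_nonneg u) hu1)
  rw [norm_sq_starProjection_eq_of_le h x]
  linarith

theorem Orthonormal.inner_sq_le_sum_inner_sq {ι : Type*} [Fintype ι] {b : ι → E}
    (hb : Orthonormal ℝ b) {w : E} (hw : w ∈ Submodule.span ℝ (Set.range b)) (hw1 : ‖w‖ ≤ 1)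
    (u : E) : ⟪w, u⟫ ^ 2 ≤ ∑ i, ⟪b i, u⟫ ^ 2 := by
  obtain ⟨c, rfl⟩ := (Submodule.mem_span_range_iff_exists_fun ℝ).1 hw
  have hc : ∑ i, c i ^ 2 ≤ 1 := by
    have := hb.inner_sum c c Finset.univ
    simp only [real_inner_self_eq_norm_sq, conj_trivial, ← sq] at this
    rw [← this]
    exact pow_le_one₀ (norm_nonneg _) hw1
  calc ⟪∑ i, c i • b i, u⟫ ^ 2 = (∑ i, c i * ⟪b i, u⟫) ^ 2 := by
        simp only [sum_inner, real_inner_smul_left]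
    _ ≤ (∑ i, c i ^ 2) * ∑ i, ⟪b i, u⟫ ^ 2 := Finset.sum_mul_sq_le_sq_mul_sq _ _ _
    _ ≤ ∑ i, ⟪b i, u⟫ ^ 2 := mul_le_of_le_one_left (by positivity) hc

end

/-- Potential decrease: if `b` is an orthonormal basis of a subspace `W`, `V ⊆ V'` are
subspaces, and there are unit vectors `v ∈ V'`, `w ∈ W` with `⟪w, proj_{V^⊥} v⟫ ≥ β ≥ 0`, then
`Φ(V') ≤ Φ(V) - β²`, where `Φ(V) = Σᵢ ‖proj_{V^⊥} b i‖²`. -/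
theorem potential_decrease {d K : ℕ} (b : Fin K → EuclideanSpace ℝ (Fin d))
    (hb : Orthonormal ℝ b)
    (V V' : Submodule ℝ (EuclideanSpace ℝ (Fin d))) (hVV' : V ≤ V')
    (v : EuclideanSpace ℝ (Fin d)) (hvV' : v ∈ V') (hv : ‖v‖ = 1)
    (w : EuclideanSpace ℝ (Fin d)) (hwW : w ∈ Submodule.span ℝ (Set.range b))
    (hw : ‖w‖ = 1) (β : ℝ) (hβ : 0 ≤ β)
    (hcorr : β ≤ ⟪w, (Submodule.orthogonalProjectionOnto Vᗮ v : EuclideanSpace ℝ (Fin d))⟫) :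
    ∑ i, ‖(Submodule.orthogonalProjectionOnto V'ᗮ (b i) : EuclideanSpace ℝ (Fin d))‖ ^ 2 ≤
      (∑ i, ‖(Submodule.orthogonalProjectionOnto Vᗮ (b i) : EuclideanSpace ℝ (Fin d))‖ ^ 2) - β ^ 2 := by
  simp only [Submodule.coe_orthogonalProjectionOnto_apply] at hcorr ⊢
  have huV' : Vᗮ.starProjection v ∈ V' := by
    rw [eq_sub_of_add_eq' (V.starProjection_add_starProjection_orthogonal v)]
    exact V'.sub_mem hvV' (hVV' (V.starProjection_apply_mem v))
  set u := Vᗮ.starProjection v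
  have hu1 : ‖u‖ ≤ 1 := hv ▸ Vᗮ.norm_starProjection_apply_le v
  have hstep (i : Fin K) := Submodule.norm_sq_starProjection_add_inner_sq_le
    (Submodule.orthogonal_le hVV') (Vᗮ.starProjection_apply_mem v)
    (Submodule.le_orthogonal_orthogonal V' huV') hu1 (b i)
  have hβu : β ^ 2 ≤ ∑ i, ⟪b i, u⟫ ^ 2 :=
    (pow_le_pow_left₀ hβ hcorr 2).trans (hb.inner_sq_le_sum_inner_sq hwW hw.le u)
  have hsum := Finset.sum_le_sum fun i (_ : i ∈ Finset.univ) => hstep i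
  rw [Finset.sum_add_distrib] at hsum
  linarith
end

section
/- Let ε ∈ (0,1) be sufficiently small, let v be a unit vector in ℝ^d, and let R: ℝ^d → [0,1] be measurable with E_{x∼N(0,I)}[R(x)] = ε. Then E_{x∼N(0,I)}[R(x)(v·x)²] ≤ C ε log(1/ε) for an absolute constant C. -/
open MeasureTheory ProbabilityTheory Real
open scoped ENNReal NNReal

lemma aux_integrable_exp_shift (a : ℝ) :
    Integrable (fun x : ℝ => Real.exp (-(1/2) * (x - a) ^ 2)) := by
  exact (integrable_exp_neg_mul_sq (by norm_num : (0:ℝ) < 1/2)).comp_sub_right a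

lemma aux_pdf_mul_exp (a x : ℝ) :
    gaussianPDFReal 0 1 x * Real.exp (a * x)
      = ((Real.sqrt (2 * Real.pi))⁻¹ * Real.exp (a ^ 2 / 2)) * Real.exp (-(1/2) * (x - a) ^ 2) := by
  calc gaussianPDFReal 0 1 x * Real.exp (a * x)
      = (Real.sqrt (2 * Real.pi))⁻¹ * Real.exp (-x ^ 2 / 2 + a * x) := by
        simp only [gaussianPDFReal, NNReal.coe_one, mul_one, sub_zero, Real.exp_add]
        ring
    _ = _ := by
        rw [show -x ^ 2 / 2 + a * x = a ^ 2 / 2 + (-(1/2) * (x - a) ^ 2) by ring, Real.exp_add]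
        ring

lemma aux_pdf_eq : (gaussianPDF 0 1) = fun x => ((gaussianPDFReal 0 1 x).toNNReal : ℝ≥0∞) := by
  funext x; simp [gaussianPDF, ENNReal.ofReal]

lemma aux_smul_eq (a : ℝ) : (fun x => ((gaussianPDFReal 0 1 x).toNNReal : ℝ≥0) • Real.exp (a * x))
    = fun x => ((Real.sqrt (2 * Real.pi))⁻¹ * Real.exp (a ^ 2 / 2)) * Real.exp (-(1/2) * (x - a) ^ 2) := by
  funext x
  rw [NNReal.smul_def, smul_eq_mul, Real.coe_toNNReal _ (gaussianPDFReal_nonneg 0 1 x),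
    aux_pdf_mul_exp]

lemma gauss_mgf_integrable (a : ℝ) :
    Integrable (fun x => Real.exp (a * x)) (gaussianReal 0 1) := by
  rw [gaussianReal_of_var_ne_zero _ one_ne_zero]
  have hm : Measurable fun x => (gaussianPDFReal 0 1 x).toNNReal :=
    (measurable_gaussianPDFReal 0 1).real_toNNReal
  rw [aux_pdf_eq, integrable_withDensity_iff_integrable_smul hm, aux_smul_eq]
  exact (aux_integrable_exp_shift a).const_mul _

lemma gauss_mgf (a : ℝ) :
    ∫ x, Real.exp (a * x) ∂gaussianReal 0 1 = Real.exp (a ^ 2 / 2) := by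
  rw [gaussianReal_of_var_ne_zero _ one_ne_zero]
  have hm : Measurable fun x => (gaussianPDFReal 0 1 x).toNNReal :=
    (measurable_gaussianPDFReal 0 1).real_toNNReal
  rw [aux_pdf_eq, integral_withDensity_eq_integral_smul hm, aux_smul_eq, integral_const_mul]
  have h3 : ∫ x : ℝ, Real.exp (-(1/2) * (x - a) ^ 2)
      = ∫ x : ℝ, Real.exp (-(1/2) * x ^ 2) :=
    integral_sub_right_eq_self (fun x => Real.exp (-(1/2) * x ^ 2)) a
  rw [h3, integral_gaussian]
  have h4 : Real.sqrt (π / (1/2)) = Real.sqrt (2 * π) := by congr 1; ring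
  rw [h4]
  have h5 : Real.sqrt (2*π) ≠ 0 := by positivity
  field_simp

lemma aux_pi_integrable {n : ℕ} {f : Fin n → ℝ → ℝ}
    (hf : ∀ i, Integrable (f i) (gaussianReal 0 1)) :
    Integrable (fun x : Fin n → ℝ => ∏ i, f i (x i))
      (Measure.pi fun _ => gaussianReal 0 1) := by
  induction n with
  | zero =>
      haveI : IsProbabilityMeasure (Measure.pi fun _ : Fin 0 => gaussianReal 0 1) :=
        inferInstance
      simpa using (integrable_const (1 : ℝ)
        (μ := Measure.pi fun _ : Fin 0 => gaussianReal 0 1))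
  | succ n n_ih =>
      have := ((MeasureTheory.measurePreserving_piFinSuccAbove
        (fun _ : Fin (n+1) => gaussianReal 0 1) 0).symm)
      rw [← this.integrable_comp_emb (MeasurableEquiv.measurableEmbedding _)]
      simp_rw [MeasurableEquiv.piFinSuccAbove_symm_apply, Fin.insertNthEquiv,
        Fin.prod_univ_succ, Fin.insertNth_zero]
      simp only [Fin.zero_succAbove, Nat.cast_id, Function.comp_def, Fin.cons_zero, Fin.cons_succ]
      have h2 : Integrable (fun (x : Fin n → ℝ) ↦ ∏ j, f (Fin.succ j) (x j))
          (Measure.pi fun _ => gaussianReal 0 1) := n_ih (fun i ↦ hf _)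
      exact Integrable.mul_prod (hf 0) h2

lemma aux_pi_integral {n : ℕ} (f : Fin n → ℝ → ℝ) :
    ∫ x : Fin n → ℝ, ∏ i, f i (x i) ∂(Measure.pi fun _ => gaussianReal 0 1)
      = ∏ i, ∫ x, f i x ∂gaussianReal 0 1 := by
  induction n with
  | zero => simp
  | succ n n_ih =>
      calc
        _ = ∫ x : ℝ × (Fin n → ℝ),
            f 0 x.1 * ∏ i : Fin n, f (Fin.succ i) (x.2 i)
            ∂((gaussianReal 0 1).prod (Measure.pi fun _ => gaussianReal 0 1)) := by
          rw [← ((MeasureTheory.measurePreserving_piFinSuccAbove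
            (fun _ : Fin (n+1) => gaussianReal 0 1) 0).symm).integral_comp']
          simp [MeasurableEquiv.piFinSuccAbove_symm_apply, Fin.insertNthEquiv,
            Fin.prod_univ_succ, Fin.insertNth_zero, Fin.zero_succAbove]
        _ = (∫ x, f 0 x ∂gaussianReal 0 1)
            * ∏ i : Fin n, ∫ x, f (Fin.succ i) x ∂gaussianReal 0 1 := by
          rw [← n_ih, ← integral_prod_mul]
        _ = ∏ i, ∫ x, f i x ∂gaussianReal 0 1 := by rw [Fin.prod_univ_succ]






/-- The standard Gaussian measure on `ℝ^d`. -/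
noncomputable def stdGaussianPi (d : ℕ) : Measure (Fin d → ℝ) :=
  Measure.pi fun _ => gaussianReal 0 1

lemma aux_exp_sum {d : ℕ} (s : ℝ) (v : Fin d → ℝ) (x : Fin d → ℝ) :
    Real.exp (s * ∑ i, v i * x i) = ∏ i, Real.exp (s * v i * (x i)) := by
  rw [← Real.exp_sum]
  congr 1
  rw [Finset.mul_sum]
  exact Finset.sum_congr rfl fun i _ => by ring

lemma mgf_pi_integrable {d : ℕ} (s : ℝ) (v : Fin d → ℝ) :
    Integrable (fun x : Fin d → ℝ => Real.exp (s * ∑ i, v i * x i)) (stdGaussianPi d) := by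
  simp_rw [aux_exp_sum]
  exact aux_pi_integrable fun i => gauss_mgf_integrable (s * v i)

lemma mgf_pi_integral {d : ℕ} (s : ℝ) (v : Fin d → ℝ) (hv : (∑ i, (v i) ^ 2) = 1) :
    ∫ x, Real.exp (s * ∑ i, v i * x i) ∂stdGaussianPi d = Real.exp (s ^ 2 / 2) := by
  simp_rw [aux_exp_sum]
  rw [show (stdGaussianPi d) = Measure.pi fun _ => gaussianReal 0 1 from rfl,
    aux_pi_integral (fun i y => Real.exp (s * v i * y))]
  have : ∀ i, ∫ x, Real.exp (s * v i * x) ∂gaussianReal 0 1 = Real.exp ((s * v i) ^ 2 / 2) :=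
    fun i => gauss_mgf (s * v i)
  rw [Finset.prod_congr rfl fun i _ => this i, ← Real.exp_sum]
  congr 1
  calc ∑ i, (s * v i) ^ 2 / 2 = s ^ 2 / 2 * ∑ i, (v i) ^ 2 := by
        rw [Finset.mul_sum]; exact Finset.sum_congr rfl fun i _ => by ring
    _ = s ^ 2 / 2 := by rw [hv]; ring

lemma pointwise_bound {T r y : ℝ} (hT : 1 ≤ T) (hr0 : 0 ≤ r) (hr1 : r ≤ 1) :
    r * y ^ 2 ≤ T ^ 2 * r
      + 4 * Real.exp (-T ^ 2) * (Real.exp ((T+1) * y) + Real.exp (-((T+1) * y))) := by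
  have hpos : 0 ≤ 4 * Real.exp (-T ^ 2) * (Real.exp ((T+1) * y) + Real.exp (-((T+1) * y))) := by
    positivity
  rcases le_or_gt (y ^ 2) (T ^ 2) with h | h
  · nlinarith
  · have hy : T < |y| := by
      refine lt_of_pow_lt_pow_left₀ 2 (abs_nonneg y) ?_
      rwa [sq_abs]
    have h1 : y ^ 2 ≤ 4 * Real.exp |y| := by
      have e1 := Real.add_one_le_exp (|y| / 2)
      have e2 : Real.exp (|y| / 2) ^ 2 = Real.exp |y| := by
        rw [sq, ← Real.exp_add]; congr 1; ring
      have e3 : (|y| / 2 + 1) ^ 2 ≤ Real.exp (|y| / 2) ^ 2 :=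
        pow_le_pow_left₀ (by positivity) e1 2
      nlinarith [abs_nonneg y, sq_abs y]
    calc r * y ^ 2 ≤ y ^ 2 := by nlinarith
      _ ≤ 4 * Real.exp (-T ^ 2) * Real.exp ((T+1) * |y|) := by
          have h2 : (1:ℝ) ≤ Real.exp (T * |y| - T ^ 2) := Real.one_le_exp (by nlinarith)
          have h3 : Real.exp (-T ^ 2) * Real.exp ((T+1) * |y|)
              = Real.exp |y| * Real.exp (T * |y| - T ^ 2) := by
            rw [← Real.exp_add, ← Real.exp_add]; congr 1; ring
          calc y ^ 2 ≤ 4 * Real.exp |y| := h1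
            _ ≤ 4 * (Real.exp |y| * Real.exp (T * |y| - T ^ 2)) := by
                nlinarith [Real.exp_pos (|y|)]
            _ = 4 * Real.exp (-T ^ 2) * Real.exp ((T+1) * |y|) := by rw [← h3]; ring
      _ ≤ _ := by
          have h4 : Real.exp ((T+1) * |y|) ≤ Real.exp ((T+1) * y) + Real.exp (-((T+1) * y)) := by
            rcases abs_cases y with ⟨hc, _⟩ | ⟨hc, _⟩ <;> rw [hc]
            · linarith [(Real.exp_pos (-((T+1) * y))).le]
            · rw [show (T+1) * -y = -((T+1) * y) by ring]
              linarith [(Real.exp_pos ((T+1) * y)).le]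
          have h5 : (0:ℝ) ≤ T ^ 2 * r := by positivity
          nlinarith [Real.exp_pos (-T ^ 2)]

/-- There is an absolute constant `C` such that for all sufficiently small `ε ∈ (0,1)`, any unit
vector `v` and any measurable `R : ℝ^d → [0,1]` with Gaussian mean `ε` satisfy
`E[R(x)(v·x)²] ≤ C ε log(1/ε)`. -/
theorem truncated_second_moment_bound :
    ∃ C > (0 : ℝ), ∃ ε₀ > (0 : ℝ), ∀ (d : ℕ) (ε : ℝ), 0 < ε → ε < ε₀ →
      ∀ v : Fin d → ℝ, (∑ i, (v i) ^ 2) = 1 →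
      ∀ R : (Fin d → ℝ) → ℝ, Measurable R → (∀ x, R x ∈ Set.Icc (0 : ℝ) 1) →
      (∫ x, R x ∂stdGaussianPi d) = ε →
      (∫ x, R x * (∑ i, v i * x i) ^ 2 ∂stdGaussianPi d) ≤ C * ε * Real.log (1 / ε) := by
  refine ⟨16, by norm_num, Real.exp (-4), Real.exp_pos _, ?_⟩
  intro d ε hε hε4 v hv R hRmeas hR01 hRint
  haveI : IsProbabilityMeasure (stdGaussianPi d) := by
    unfold stdGaussianPi; infer_instance
  set L := Real.log (1 / ε) with hLdef
  have hε1 : ε < 1 := hε4.trans (by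
    calc Real.exp (-4) < Real.exp 0 := Real.exp_lt_exp.mpr (by norm_num)
      _ = 1 := Real.exp_zero)
  have hL : 4 < L := by
    rw [hLdef, show (4:ℝ) = Real.log (Real.exp 4) from (Real.log_exp 4).symm]
    apply Real.log_lt_log (Real.exp_pos 4)
    rw [show Real.exp 4 = 1 / Real.exp (-4) by rw [Real.exp_neg, one_div, inv_inv]]
    exact one_div_lt_one_div_of_lt hε hε4
  set T := Real.sqrt (8 * L) with hTdef
  have hT0 : 0 ≤ T := Real.sqrt_nonneg _
  have hT2 : T ^ 2 = 8 * L := Real.sq_sqrt (by linarith)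
  have hT5 : 5 ≤ T := by nlinarith
  -- integrability of R
  have hRint' : Integrable R (stdGaussianPi d) := by
    refine Integrable.mono' (integrable_const 1) hRmeas.aestronglyMeasurable ?_
    refine ae_of_all _ fun x => ?_
    rw [Real.norm_eq_abs, abs_le]
    exact ⟨by linarith [(hR01 x).1], (hR01 x).2⟩
  -- the dominating function
  set g : (Fin d → ℝ) → ℝ := fun x => T ^ 2 * R x
    + 4 * Real.exp (-T ^ 2) * (Real.exp ((T+1) * ∑ i, v i * x i)
      + Real.exp (-((T+1) * ∑ i, v i * x i))) with hgdef
  have hgint : Integrable g (stdGaussianPi d) := by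
    apply (hRint'.const_mul _).add
    apply Integrable.const_mul
    have h2 := mgf_pi_integrable (d := d) (-(T+1)) v
    simp_rw [neg_mul] at h2
    exact (mgf_pi_integrable (T+1) v).add h2
  have hmono : (∫ x, R x * (∑ i, v i * x i) ^ 2 ∂stdGaussianPi d) ≤ ∫ x, g x ∂stdGaussianPi d := by
    refine integral_mono_of_nonneg (ae_of_all _ fun x => ?_) hgint (ae_of_all _ fun x => ?_)
    · exact mul_nonneg (hR01 x).1 (sq_nonneg _)
    · exact pointwise_bound (by linarith) (hR01 x).1 (hR01 x).2
  have hgval : ∫ x, g x ∂stdGaussianPi d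
      = T ^ 2 * ε + 8 * Real.exp ((T+1) ^ 2 / 2 - T ^ 2) := by
    rw [hgdef]
    rw [integral_add (hRint'.const_mul _) ?hint]
    case hint =>
      apply Integrable.const_mul
      have h2 := mgf_pi_integrable (d := d) (-(T+1)) v
      simp_rw [neg_mul] at h2
      exact (mgf_pi_integrable (T+1) v).add h2
    rw [integral_const_mul, integral_const_mul, hRint]
    have h2 := mgf_pi_integrable (d := d) (-(T+1)) v
    simp_rw [neg_mul] at h2
    rw [integral_add (mgf_pi_integrable (T+1) v) h2]
    have e1 : ∫ x, Real.exp ((T+1) * ∑ i, v i * x i) ∂stdGaussianPi d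
        = Real.exp ((T+1) ^ 2 / 2) := mgf_pi_integral (T+1) v hv
    have e2 : ∫ x, Real.exp (-((T+1) * ∑ i, v i * x i)) ∂stdGaussianPi d
        = Real.exp ((T+1) ^ 2 / 2) := by
      have := mgf_pi_integral (d := d) (-(T+1)) v hv
      simp_rw [neg_mul] at this
      rw [this, neg_pow]
      norm_num
    rw [e1, e2, Real.exp_sub, Real.exp_neg]
    field_simp
    ring
  -- final arithmetic
  have harith : T ^ 2 * ε + 8 * Real.exp ((T+1) ^ 2 / 2 - T ^ 2) ≤ 16 * ε * L := by
    have hexp : Real.exp ((T+1) ^ 2 / 2 - T ^ 2) ≤ Real.exp (-(2 * L)) := by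
      apply Real.exp_le_exp.mpr
      nlinarith
    have hexp2 : Real.exp (-(2 * L)) = ε ^ 2 := by
      rw [hLdef, Real.log_div one_ne_zero (ne_of_gt hε), Real.log_one]
      rw [show -(2 * (0 - Real.log ε)) = 2 * Real.log ε by ring]
      rw [show (2 : ℝ) * Real.log ε = Real.log ε + Real.log ε by ring, Real.exp_add,
        Real.exp_log hε]
      ring
    have : Real.exp ((T+1) ^ 2 / 2 - T ^ 2) ≤ ε ^ 2 := by rw [← hexp2]; exact hexp
    nlinarith
  calc (∫ x, R x * (∑ i, v i * x i) ^ 2 ∂stdGaussianPi d)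
      ≤ T ^ 2 * ε + 8 * Real.exp ((T+1) ^ 2 / 2 - T ^ 2) := hgval ▸ hmono
    _ ≤ 16 * ε * L := harith
end

section
/- Let K ≥ 8 be divisible by 4. Define h' ∈ ℝᴷ by h'_j = 2/K + (2/K)(−1)^j cos(2πj/K) for j = 0,…,K−1. Then all coordinates of h' are nonnegative, h'_0 = 4/K is the maximum coordinate, h'_{K/2} = 0, and h'_0 − max_{j∈[K−1]} h'_j ≥ (2/K)(1 − cos(2π/K)) ≥ c/K³ for an absolute constant c > 0. -/
/-- The vector `h'_j = 2/K + (2/K)(-1)^j cos(2πj/K)`. -/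
noncomputable def hvec (K : ℕ) (j : ℕ) : ℝ :=
  2 / K + (2 / K) * (-1 : ℝ) ^ j * Real.cos (2 * Real.pi * j / K)

/-!
Write `h'_j = (2/K)(1 + (-1)^j cos(2πj/K))`. Since `(-1)^j cos(2πj/K)` is `cos(2πj/K)` for even `j`
and `cos(2π(K/2 - j)/K)` for odd `j`, it is always the real part of a `K`-th root of unity; when
`4 ∣ K` and `0 < j < K` that root is not `1`, so its real part is at most `cos(2π/K)`. The final
bound is the quadratic estimate `cos x ≤ 1 - 2x²/π²` on `[-π, π]`, giving `c = 16`.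
-/

open Real

theorem Real.cos_le_cos_of_le_of_le_two_pi_sub {a x : ℝ} (ha : 0 ≤ a) (hax : a ≤ x)
    (hxa : x ≤ 2 * π - a) : cos x ≤ cos a := by
  rcases le_total x π with hxπ | hπx
  · exact cos_le_cos_of_nonneg_of_le_pi ha hxπ hax
  · rw [← cos_two_pi_sub]
    exact cos_le_cos_of_nonneg_of_le_pi ha (by linarith) (by linarith)

theorem Real.cos_two_pi_mul_div_le_of_not_dvd {K : ℕ} {k : ℤ} (hk : ¬ (K : ℤ) ∣ k) :
    cos (2 * π * k / K) ≤ cos (2 * π / K) := by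
  rcases Nat.eq_zero_or_pos K with rfl | hK
  · simp
  have hKr : (0 : ℝ) < K := by exact_mod_cast hK
  set r := k % K
  have hr0 : 0 < r := lt_of_le_of_ne (Int.emod_nonneg k (by omega))
    (fun h => hk (Int.dvd_of_emod_eq_zero h.symm))
  have hrK : r < K := Int.emod_lt_of_pos k (by omega)
  have hr1 : (1 : ℝ) ≤ r := by exact_mod_cast hr0
  have hrK' : (r : ℝ) ≤ K - 1 := by
    have : (r : ℝ) + 1 ≤ K := by exact_mod_cast hrK
    linarith
  have hshift : 2 * π * k / K = 2 * π * r / K + (k / K : ℤ) * (2 * π) := by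
    have hk' : (k : ℝ) = r + K * (k / K : ℤ) := by exact_mod_cast (Int.emod_add_mul_ediv k K).symm
    rw [hk']
    field_simp
  rw [hshift, cos_add_int_mul_two_pi]
  apply cos_le_cos_of_le_of_le_two_pi_sub (by positivity)
  · rw [div_le_div_iff_of_pos_right hKr]
    nlinarith [pi_pos]
  · rw [le_sub_iff_add_le, ← add_div, div_le_iff₀ hKr]
    nlinarith [pi_pos]

theorem neg_one_pow_mul_cos_le {K j : ℕ} (hK : 4 ∣ K) (hj : 1 ≤ j) (hjK : j < K) :
    (-1 : ℝ) ^ j * cos (2 * π * j / K) ≤ cos (2 * π / K) := by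
  obtain ⟨m, rfl⟩ := hK
  rcases Nat.even_or_odd j with he | ho
  · rw [he.neg_one_pow, one_mul]
    refine cos_two_pi_mul_div_le_of_not_dvd (k := j) ?_
    exact_mod_cast Nat.not_dvd_of_pos_of_lt hj hjK
  · -- `-cos (2πj/K) = cos (2π (K/2 - j)/K)`, and `K/2 - j` is odd, hence not a multiple of `K`.
    have hcos : (-1 : ℝ) ^ j * cos (2 * π * j / ↑(4 * m)) =
        cos (2 * π * ((2 * m - j : ℤ) : ℝ) / ↑(4 * m)) := by
      rw [ho.neg_one_pow, neg_one_mul, ← cos_pi_sub]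
      congr 1
      have hm : (m : ℝ) ≠ 0 := Nat.cast_ne_zero.mpr (by omega)
      push_cast
      field_simp
      ring
    rw [hcos]
    refine cos_two_pi_mul_div_le_of_not_dvd ?_
    rintro ⟨t, ht⟩
    have : (2 : ℤ) ∣ 2 * m - j := ⟨2 * m * t, by rw [ht]; push_cast; ring⟩
    obtain ⟨s, rfl⟩ := ho
    omega

theorem eight_div_sq_le_one_sub_cos_two_pi_div {K : ℕ} (hK : 2 ≤ K) :
    8 / (K : ℝ) ^ 2 ≤ 1 - cos (2 * π / K) := by
  have hKr : (2 : ℝ) ≤ K := by exact_mod_cast hK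
  have hx : |2 * π / K| ≤ π := by
    rw [abs_of_nonneg (by positivity), div_le_iff₀ (by positivity)]
    nlinarith [pi_pos]
  have := cos_le_one_sub_mul_cos_sq hx
  have : 2 / π ^ 2 * (2 * π / K) ^ 2 = 8 / (K : ℝ) ^ 2 := by
    field_simp
    ring
  linarith

theorem hvec_eq_mul (K j : ℕ) :
    hvec K j = 2 / K * (1 + (-1 : ℝ) ^ j * cos (2 * π * j / K)) := by
  rw [hvec]
  ring

theorem abs_neg_one_pow_mul_cos_le_one (j : ℕ) (x : ℝ) : |(-1 : ℝ) ^ j * cos x| ≤ 1 := by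
  simpa using abs_cos_le_one x

theorem hvec_nonneg (K j : ℕ) : 0 ≤ hvec K j := by
  rw [hvec_eq_mul]
  have := neg_le_of_abs_le (abs_neg_one_pow_mul_cos_le_one j (2 * π * j / K))
  exact mul_nonneg (by positivity) (by linarith)

theorem hvec_zero (K : ℕ) : hvec K 0 = 4 / K := by
  simp only [hvec_eq_mul, pow_zero, CharP.cast_eq_zero, mul_zero, zero_div, cos_zero]
  ring

theorem hvec_zero_sub_hvec (K j : ℕ) :
    hvec K 0 - hvec K j = 2 / K * (1 - (-1 : ℝ) ^ j * cos (2 * π * j / K)) := by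
  rw [hvec_zero, hvec_eq_mul]
  ring

theorem hvec_le_hvec_zero (K j : ℕ) : hvec K j ≤ hvec K 0 := by
  rw [← sub_nonneg, hvec_zero_sub_hvec]
  have := le_of_abs_le (abs_neg_one_pow_mul_cos_le_one j (2 * π * j / K))
  exact mul_nonneg (by positivity) (by linarith)

theorem hvec_half {K : ℕ} (hK : 4 ∣ K) : hvec K (K / 2) = 0 := by
  obtain ⟨m, rfl⟩ := hK
  rcases eq_or_ne m 0 with rfl | hm
  · simp [hvec]
  have harg : 2 * π * ((4 * m / 2 : ℕ) : ℝ) / ((4 * m : ℕ) : ℝ) = π := by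
    rw [show 4 * m / 2 = 2 * m by omega]
    push_cast
    field_simp
    ring
  rw [hvec_eq_mul, harg, cos_pi, show 4 * m / 2 = 2 * m by omega, (even_two_mul m).neg_one_pow]
  ring

/-- For `K ≥ 8` divisible by `4`: all coordinates of `h'` are nonnegative, `h'_0 = 4/K` is the
maximum, `h'_{K/2} = 0`, and `h'_0 - max_{1 ≤ j < K} h'_j ≥ (2/K)(1 - cos(2π/K)) ≥ c/K³` for an
absolute constant `c > 0`. -/
theorem hvec_properties :
    ∃ c > (0 : ℝ), ∀ K : ℕ, 8 ≤ K → 4 ∣ K →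
      (∀ j < K, 0 ≤ hvec K j) ∧
      hvec K 0 = 4 / K ∧
      (∀ j < K, hvec K j ≤ hvec K 0) ∧
      hvec K (K / 2) = 0 ∧
      (∀ j, 1 ≤ j → j < K →
        (2 / K) * (1 - Real.cos (2 * Real.pi / K)) ≤ hvec K 0 - hvec K j) ∧
      c / (K : ℝ) ^ 3 ≤ (2 / K) * (1 - Real.cos (2 * Real.pi / K)) := by
  refine ⟨16, by norm_num, fun K hK8 hK4 => ⟨fun j _ => hvec_nonneg K j, hvec_zero K,
    fun j _ => hvec_le_hvec_zero K j, hvec_half hK4, fun j hj hjK => ?_, ?_⟩⟩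
  · rw [hvec_zero_sub_hvec]
    gcongr
    exact neg_one_pow_mul_cos_le hK4 hj hjK
  · calc 16 / (K : ℝ) ^ 3 = 2 / K * (8 / (K : ℝ) ^ 2) := by ring
      _ ≤ 2 / K * (1 - cos (2 * π / K)) := by
        gcongr
        exact eight_div_sq_le_one_sub_cos_two_pi_div (by omega)
end

section
/- Let f: ℝ² → [K] be the multiclass linear classifier f(x) = argmax_{k∈[K]} w⁽ᵏ⁾·x with w⁽ᵏ⁾ = (cos(2πk/K), sin(2πk/K)), and let p(x,y) = (x+iy)^a (x−iy)^b with a, b nonnegative integers, a ≠ b. Then the vector v ∈ ℂᴷ with v_j = E_{(x,y)∼N(0,I₂)}[p(x,y) 1(f(x,y)=j)] satisfies v_{(j+1) mod K} = v_j · e^{2πi(a−b)/K} for all j, i.e. v is a scalar multiple of the root-of-unity vector ω^{(a−b)}. Moreover, if a = b then the analogously centered correlation vector is zero. -/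
/-!
Rotation `R` of the plane by `2π/K` preserves the standard Gaussian, carries the score of class
`k + 1` to that of class `k`, and multiplies `(x+iy)^a (x-iy)^b` by `e^{2πi(a-b)/K}`. Away from
the null set where two scores tie, the argmax classifier therefore satisfies
`f (R z) = f z + 1`, and the change of variables `z ↦ R z` turns `v_{j+1}` into
`e^{2πi(a-b)/K} v_j`. For `a = b` the factor is `1`, so all `v_j` coincide, and since the sectors
partition the plane each equals `E[p] / K`.
-/

open MeasureTheory ProbabilityTheory

/-- The standard Gaussian measure on `ℝ²`. -/
noncomputable def gauss2 : Measure (ℝ × ℝ) :=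
  (gaussianReal 0 1).prod (gaussianReal 0 1)

/-- The correlation vector `v_j = E[(x+iy)^a (x-iy)^b 1(f(x,y)=j)]`. -/
noncomputable def sectorMoment {K : ℕ} (f : ℝ × ℝ → Fin K) (a b : ℕ) (j : Fin K) : ℂ :=
  ∫ z, ((z.1 : ℂ) + Complex.I * z.2) ^ a * ((z.1 : ℂ) - Complex.I * z.2) ^ b *
    (if f z = j then 1 else 0) ∂gauss2

lemma Fin.apply_eq_apply_zero_of_add_one {K : ℕ} [NeZero K] {α : Type*} {v : Fin K → α}
    (h : ∀ j, v (j + 1) = v j) (j : Fin K) : v j = v 0 := by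
  obtain ⟨n, rfl⟩ := Nat.exists_eq_succ_of_ne_zero (NeZero.ne K)
  induction j using Fin.induction with
  | zero => rfl
  | succ i ih => rw [← Fin.coeSucc_eq_succ, h, ih]

lemma integral_eq_card_mul_of_integral_mul_ite_eq {Ω 𝕜 : Type*} [MeasurableSpace Ω] [RCLike 𝕜]
    {μ : Measure Ω} {K : ℕ} {g : Ω → Fin K} (hg : Measurable g) {P : Ω → 𝕜} {c : 𝕜}
    (hc : ∀ j, ∫ x, P x * (if g x = j then 1 else 0) ∂μ = c) :
    ∫ x, P x ∂μ = K * c := by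
  have hsum : (fun x => ∑ j, P x * (if g x = j then 1 else 0)) = P := by
    ext x
    simp
  by_cases hP : Integrable P μ
  · have hpiece (j : Fin K) : Integrable (fun x => P x * (if g x = j then 1 else 0)) μ := by
      refine (hP.indicator (hg (measurableSet_singleton j))).congr (ae_of_all _ fun x => ?_)
      by_cases hx : g x = j <;> simp [hx]
    rw [← hsum, integral_finsetSum _ fun j _ => hpiece j]
    simp only [hc, Finset.sum_const, Finset.card_univ, Fintype.card_fin, nsmul_eq_mul]
  · -- Some piece is not integrable either, so both sides are the junk value `0`.
    obtain ⟨j, hj⟩ : ∃ j, ¬Integrable (fun x => P x * (if g x = j then 1 else 0)) μ := by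
      by_contra! hall
      exact hP (hsum ▸ integrable_finsetSum _ fun j _ => hall j)
    rw [integral_undef hP, ← hc j, integral_undef hj, mul_zero]

section

open Real

lemma rotation_neg_apply (θ : ℝ) (z : ℝ × ℝ) :
    ContinuousLinearMap.rotation (-θ) z =
      (cos θ * z.1 - sin θ * z.2, sin θ * z.1 + cos θ * z.2) := by
  simp only [ContinuousLinearMap.rotation_apply, cos_neg, sin_neg, smul_eq_mul, Prod.mk.injEq]
  constructor <;> ring

lemma rotation_leftInverse (θ : ℝ) :
    Function.LeftInverse (ContinuousLinearMap.rotation (-θ) : ℝ × ℝ → ℝ × ℝ)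
      (ContinuousLinearMap.rotation θ) := by
  intro z
  simp only [ContinuousLinearMap.rotation_apply, cos_neg, sin_neg, smul_eq_mul]
  ext
  · linear_combination z.1 * sin_sq_add_cos_sq θ
  · linear_combination z.2 * sin_sq_add_cos_sq θ

lemma measurableEmbedding_rotation (θ : ℝ) :
    MeasurableEmbedding (ContinuousLinearMap.rotation θ : ℝ × ℝ → ℝ × ℝ) :=
  (ContinuousLinearMap.rotation θ).continuous.measurableEmbedding
    (rotation_leftInverse θ).injective

lemma measurePreserving_rotation_gauss2 (θ : ℝ) :
    MeasurePreserving (ContinuousLinearMap.rotation θ) gauss2 gauss2 :=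
  ⟨(ContinuousLinearMap.rotation θ).continuous.measurable,
    IsGaussian.map_rotation_eq_self (by simp [integral_id_gaussianReal]) θ⟩

lemma gauss2_absolutelyContinuous : gauss2 ≪ volume := by
  rw [gauss2, Measure.volume_eq_prod]
  exact (gaussianReal_absolutelyContinuous 0 one_ne_zero).prod
    (gaussianReal_absolutelyContinuous 0 one_ne_zero)

lemma volume_setOf_dot_eq_zero {v : ℝ × ℝ} (hv : v ≠ 0) :
    volume {z : ℝ × ℝ | v.1 * z.1 + v.2 * z.2 = 0} = 0 := by
  let L : (ℝ × ℝ) →ₗ[ℝ] ℝ := v.1 • LinearMap.fst ℝ ℝ ℝ + v.2 • LinearMap.snd ℝ ℝ ℝ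
  refine Measure.addHaar_submodule volume (LinearMap.ker L) fun htop => hv ?_
  have hLv : v.1 * v.1 + v.2 * v.2 = 0 := by
    simpa [L] using LinearMap.congr_fun (LinearMap.ker_eq_top.mp htop) v
  ext <;> simp <;> nlinarith

noncomputable def planeMonomial (a b : ℕ) (z : ℝ × ℝ) : ℂ :=
  ((z.1 : ℂ) + Complex.I * z.2) ^ a * ((z.1 : ℂ) - Complex.I * z.2) ^ b

lemma planeMonomial_rotation (a b : ℕ) (θ : ℝ) (z : ℝ × ℝ) :
    planeMonomial a b (ContinuousLinearMap.rotation (-θ) z) =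
      Complex.exp (θ * Complex.I * ((a : ℂ) - b)) * planeMonomial a b z := by
  have hplus : ((ContinuousLinearMap.rotation (-θ) z).1 : ℂ) +
      Complex.I * (ContinuousLinearMap.rotation (-θ) z).2 =
      Complex.exp (θ * Complex.I) * ((z.1 : ℂ) + Complex.I * z.2) := by
    rw [rotation_neg_apply, Complex.exp_mul_I, ← Complex.ofReal_cos, ← Complex.ofReal_sin]
    push_cast
    linear_combination (-Complex.sin θ * z.2) * Complex.I_sq
  have hminus : ((ContinuousLinearMap.rotation (-θ) z).1 : ℂ) -
      Complex.I * (ContinuousLinearMap.rotation (-θ) z).2 =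
      Complex.exp (-θ * Complex.I) * ((z.1 : ℂ) - Complex.I * z.2) := by
    rw [rotation_neg_apply, Complex.exp_mul_I, Complex.cos_neg, Complex.sin_neg,
      ← Complex.ofReal_cos, ← Complex.ofReal_sin]
    push_cast
    linear_combination (-Complex.sin θ * z.2) * Complex.I_sq
  rw [planeMonomial, planeMonomial, hplus, hminus, mul_pow, mul_pow, ← Complex.exp_nat_mul,
    ← Complex.exp_nat_mul, mul_mul_mul_comm, ← Complex.exp_add]
  ring_nf

variable {K : ℕ}

noncomputable def sectorAngle (K : ℕ) (k : Fin K) : ℝ := 2 * π * ((k : ℕ) : ℝ) / K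

noncomputable def sectorDir (K : ℕ) (k : Fin K) : ℝ × ℝ :=
  (cos (sectorAngle K k), sin (sectorAngle K k))

noncomputable def sectorScore (K : ℕ) (k : Fin K) (z : ℝ × ℝ) : ℝ :=
  (sectorDir K k).1 * z.1 + (sectorDir K k).2 * z.2

def IsSectorArgmax (f : ℝ × ℝ → Fin K) : Prop :=
  ∀ z k, sectorScore K k z ≤ sectorScore K (f z) z

lemma exp_sectorAngle_mul_I (k : Fin K) :
    Complex.exp (sectorAngle K k * Complex.I) = Complex.exp (2 * π * Complex.I / K) ^ (k : ℕ) := by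
  rw [← Complex.exp_nat_mul, sectorAngle]
  push_cast
  ring_nf

variable [NeZero K]

lemma sectorDir_injective : Function.Injective (sectorDir K) := by
  intro k k' h
  have hexp : Complex.exp (sectorAngle K k * Complex.I) =
      Complex.exp (sectorAngle K k' * Complex.I) := by
    simp only [sectorDir, Prod.mk.injEq] at h
    rw [Complex.exp_mul_I, Complex.exp_mul_I, ← Complex.ofReal_cos, ← Complex.ofReal_sin,
      ← Complex.ofReal_cos, ← Complex.ofReal_sin, h.1, h.2]
  rw [exp_sectorAngle_mul_I, exp_sectorAngle_mul_I] at hexp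
  exact Fin.ext <| (Complex.isPrimitiveRoot_exp K (NeZero.ne K)).pow_inj k.isLt k'.isLt hexp

lemma sectorAngle_add_one (k : Fin K) :
    sectorAngle K (k + 1) = sectorAngle K k + 2 * π / K - (((k : ℕ) + 1) / K : ℕ) * (2 * π) := by
  have hK : (K : ℝ) ≠ 0 := Nat.cast_ne_zero.mpr (NeZero.ne K)
  have hval : (((k + 1 : Fin K) : ℕ) : ℝ) = (k : ℕ) + 1 - K * (((k : ℕ) + 1) / K : ℕ) := by
    rw [Fin.val_add, Fin.val_one', Nat.add_mod_mod, eq_sub_iff_add_eq]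
    exact_mod_cast Nat.mod_add_div _ _
  rw [sectorAngle, sectorAngle, hval]
  field_simp

lemma sectorScore_rotation (k : Fin K) (z : ℝ × ℝ) :
    sectorScore K (k + 1) (ContinuousLinearMap.rotation (-(2 * π / K)) z) = sectorScore K k z := by
  have hcos := cos_periodic.sub_nat_mul_eq (x := sectorAngle K k + 2 * π / K) (((k : ℕ) + 1) / K)
  have hsin := sin_periodic.sub_nat_mul_eq (x := sectorAngle K k + 2 * π / K) (((k : ℕ) + 1) / K)
  simp only [sectorScore, sectorDir, rotation_neg_apply, sectorAngle_add_one, hcos, hsin,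
    cos_add, sin_add]
  linear_combination (cos (sectorAngle K k) * z.1 + sin (sectorAngle K k) * z.2) *
    sin_sq_add_cos_sq (2 * π / K)

lemma ae_sectorScore_injective :
    ∀ᵐ z ∂gauss2, ∀ k k' : Fin K, sectorScore K k z = sectorScore K k' z → k = k' := by
  simp only [ae_all_iff]
  intro k k'
  by_cases hkk' : k = k'
  · exact ae_of_all _ fun _ _ => hkk'
  refine measure_mono_null (fun z hz => ?_) <| gauss2_absolutelyContinuous <|
    volume_setOf_dot_eq_zero (sub_ne_zero.mpr (sectorDir_injective.ne hkk'))
  have hz : sectorScore K k z = sectorScore K k' z := (Classical.not_imp.mp hz).1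
  simp only [sectorScore] at hz
  simp only [Set.mem_ofPred_eq, Prod.fst_sub, Prod.snd_sub]
  linarith

lemma IsSectorArgmax.ae_apply_rotation {f : ℝ × ℝ → Fin K} (hf : IsSectorArgmax f) :
    ∀ᵐ z ∂gauss2, f (ContinuousLinearMap.rotation (-(2 * π / K)) z) = f z + 1 := by
  filter_upwards [ae_sectorScore_injective (K := K)] with z hinj
  set Rz := ContinuousLinearMap.rotation (-(2 * π / K)) z
  have hle : sectorScore K (f z) z ≤ sectorScore K (f Rz - 1) z := calc
    sectorScore K (f z) z = sectorScore K (f z + 1) Rz := (sectorScore_rotation _ z).symm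
    _ ≤ sectorScore K (f Rz) Rz := hf Rz _
    _ = sectorScore K (f Rz - 1) z := by rw [← sectorScore_rotation (f Rz - 1) z, sub_add_cancel]
  rw [← hinj (f Rz - 1) (f z) (le_antisymm (hf z _) hle), sub_add_cancel]

lemma sectorMoment_add_one {f : ℝ × ℝ → Fin K} (hf : IsSectorArgmax f) (a b : ℕ) (j : Fin K) :
    sectorMoment f a b (j + 1) =
      sectorMoment f a b j * Complex.exp (2 * π * Complex.I * ((a : ℂ) - b) / K) := by
  set R := ContinuousLinearMap.rotation (-(2 * π / K)) (E := ℝ)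
  calc sectorMoment f a b (j + 1)
      = ∫ z, planeMonomial a b (R z) * (if f (R z) = j + 1 then 1 else 0) ∂gauss2 :=
        ((measurePreserving_rotation_gauss2 _).integral_comp (measurableEmbedding_rotation _)
          fun z => planeMonomial a b z * (if f z = j + 1 then 1 else 0)).symm
    _ = ∫ z, Complex.exp (2 * π * Complex.I * ((a : ℂ) - b) / K) *
          (planeMonomial a b z * (if f z = j then 1 else 0)) ∂gauss2 := by
        refine integral_congr_ae ?_
        filter_upwards [hf.ae_apply_rotation] with z hz
        simp only [R, hz, planeMonomial_rotation, add_left_inj]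
        push_cast
        ring_nf
    _ = _ := by
        rw [integral_const_mul, mul_comm]
        rfl

end

/-- For the multiclass linear classifier `f(x) = argmax_k w⁽ᵏ⁾·x` with
`w⁽ᵏ⁾ = (cos(2πk/K), sin(2πk/K))` and `p(x,y) = (x+iy)^a (x-iy)^b`: if `a ≠ b` the vector
`v_j = E[p·1(f=j)]` satisfies `v_{j+1} = v_j e^{2πi(a-b)/K}` (indices mod `K`), i.e. it is a
multiple of the root-of-unity vector `ω^{(a-b)}`; if `a = b` then the centered correlation
vector vanishes, i.e. `v_j = E[p]/K` for all `j`. -/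
theorem sector_moment_root_of_unity {K : ℕ} [NeZero K] (f : ℝ × ℝ → Fin K)
    (hfm : Measurable f)
    (hf : ∀ z : ℝ × ℝ, ∀ k : Fin K,
      Real.cos (2 * Real.pi * ((k : ℕ) : ℝ) / K) * z.1 +
          Real.sin (2 * Real.pi * ((k : ℕ) : ℝ) / K) * z.2 ≤
        Real.cos (2 * Real.pi * (((f z) : ℕ) : ℝ) / K) * z.1 +
          Real.sin (2 * Real.pi * (((f z) : ℕ) : ℝ) / K) * z.2)
    (a b : ℕ) :
    (a ≠ b → ∀ j : Fin K,
      sectorMoment f a b (j + 1) =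
        sectorMoment f a b j *
          Complex.exp (2 * (Real.pi : ℂ) * Complex.I * ((a : ℂ) - (b : ℂ)) / (K : ℂ))) ∧
    (a = b → ∀ j : Fin K,
      sectorMoment f a b j =
        (∫ z, ((z.1 : ℂ) + Complex.I * z.2) ^ a * ((z.1 : ℂ) - Complex.I * z.2) ^ b ∂gauss2) /
          (K : ℂ)) := by
  have hargmax : IsSectorArgmax f := hf
  refine ⟨fun _ => sectorMoment_add_one hargmax a b, ?_⟩
  rintro rfl j
  have hconst : ∀ j, sectorMoment f a a j = sectorMoment f a a 0 :=
    Fin.apply_eq_apply_zero_of_add_one fun j => by simpa using sectorMoment_add_one hargmax a a j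
  rw [integral_eq_card_mul_of_integral_mul_ite_eq hfm hconst, hconst j,
    mul_div_cancel_left₀ _ (Nat.cast_ne_zero.mpr (NeZero.ne K))]
end
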